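/- arXiv:1706.09265 — 8 statements merged into one kernel-verified Lean document; each statement's English description precedes it below -/
import Mathlib

section
/- Let N be an isolating block with respect to F and let U be an open neighborhood of F(N) ∩ F⁻¹(N) ∩ N with cl U ⊆ int N. Then P₁ := (F(N) ∩ N) ∪ cl U and P₂ := F(N) ∩ bd N form a weak index pair P = (P₁, P₂) in N. -/
open Set Topology

/-- Upper semicontinuity of a multivalued map. -/
def UpperSemicont {X Y : Type*} [TopologicalSpace X] [TopologicalSpace Y]
    (F : X → Set Y) : Prop :=
  ∀ U : Set Y, IsOpen U → IsOpen {x | F x ⊆ U}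

/-- The image `F(A) = ⋃ x ∈ A, F x`. -/
def ImageSet {X Y : Type*} (F : X → Set Y) (A : Set X) : Set Y :=
  ⋃ x ∈ A, F x

/-- The large counterimage `F⁻¹(B) = {x | F x ∩ B ≠ ∅}`. -/
def LargePre {X Y : Type*} (F : X → Set Y) (B : Set Y) : Set X :=
  {x | (F x ∩ B).Nonempty}

/-- The invariant part of `N`: points through which there is a full solution in `N`. -/
def InvPart {X : Type*} (F : X → Set X) (N : Set X) : Set X :=
  {x | ∃ σ : ℤ → X, σ 0 = x ∧ (∀ n, σ n ∈ N) ∧ ∀ n, σ (n + 1) ∈ F (σ n)}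


/-- The `F`-boundary of a set `A`: `bd_F(A) = cl A ∩ cl (F(A) \ A)`. -/
def FBoundary {X : Type*} [TopologicalSpace X] (F : X → Set X) (A : Set X) : Set X :=
  closure A ∩ closure (ImageSet F A \ A)

/-- `(P₁, P₂)` is a weak index pair in `N` for `F`. -/
def IsWeakIndexPair {X : Type*} [TopologicalSpace X] (F : X → Set X)
    (N P₁ P₂ : Set X) : Prop :=
  IsCompact P₁ ∧ IsCompact P₂ ∧ P₂ ⊆ P₁ ∧ P₁ ⊆ N ∧
  ImageSet F P₁ ∩ N ⊆ P₁ ∧ ImageSet F P₂ ∩ N ⊆ P₂ ∧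
  FBoundary F P₁ ⊆ P₂ ∧
  InvPart F N ⊆ interior (P₁ \ P₂) ∧
  P₁ \ P₂ ⊆ interior N

lemma imageSet_mono {X Y : Type*} (F : X → Set Y) {A B : Set X} (h : A ⊆ B) :
    ImageSet F A ⊆ ImageSet F B :=
  biUnion_subset_biUnion_left h

lemma isCompact_imageSet {X Y : Type*} [TopologicalSpace X] [TopologicalSpace Y]
    {F : X → Set Y} (hF : UpperSemicont F) (hFc : ∀ x, IsCompact (F x))
    {N : Set X} (hN : IsCompact N) : IsCompact (ImageSet F N) := by
  classical
  apply isCompact_of_finite_subcover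
  intro ι V hVo hcov
  have hx : ∀ x : X, x ∈ N → ∃ t : Finset ι, F x ⊆ ⋃ i ∈ t, V i := by
    intro x hxN
    exact (hFc x).elim_finite_subcover V hVo
      (fun y hy => hcov (mem_biUnion hxN hy))
  choose! t ht using hx
  have hWo : ∀ x : X, IsOpen {y | F y ⊆ ⋃ i ∈ t x, V i} :=
    fun x => hF _ (isOpen_biUnion fun i _ => hVo i)
  obtain ⟨s, hs⟩ := hN.elim_finite_subcover
    (fun x : N => {y | F y ⊆ ⋃ i ∈ t x.1, V i})
    (fun x => hWo x.1)
    (by intro x hxN; exact mem_iUnion.2 ⟨⟨x, hxN⟩, ht x hxN⟩)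
  refine ⟨s.biUnion (fun x => t x.1), ?_⟩
  intro y hy
  obtain ⟨x, hxN, hyFx⟩ := mem_iUnion₂.1 hy
  obtain ⟨x', hx's⟩ := mem_iUnion₂.1 (hs hxN)
  obtain ⟨hx'mem, hFsub⟩ := hx's
  have := hFsub hyFx
  obtain ⟨i, hit, hyV⟩ := mem_iUnion₂.1 this
  exact mem_iUnion₂.2 ⟨i, Finset.mem_biUnion.2 ⟨x', hx'mem, hit⟩, hyV⟩

/-- in an isolating block `N`, the pair
`P₁ = (F(N) ∩ N) ∪ cl U`, `P₂ = F(N) ∩ bd N` is a weak index pair in `N`,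
whenever `U` is an open neighborhood of `F(N) ∩ F⁻¹(N) ∩ N` with `cl U ⊆ int N`. -/
theorem weakIndexPair_in_isolatingBlock {X : Type*} [TopologicalSpace X]
    [LocallyCompactSpace X] [T2Space X] (F : X → Set X)
    (hF : UpperSemicont F) (hFc : ∀ x, IsCompact (F x))
    (N : Set X) (hN : IsCompact N)
    (hblock : N ∩ ImageSet F N ∩ LargePre F N ⊆ interior N)
    (U : Set X) (hU : IsOpen U)
    (hUnbhd : ImageSet F N ∩ LargePre F N ∩ N ⊆ U)
    (hUcl : closure U ⊆ interior N) :
    IsWeakIndexPair F N ((ImageSet F N ∩ N) ∪ closure U)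
      (ImageSet F N ∩ frontier N) := by
  have hNcl : IsClosed N := hN.isClosed
  have hFNc : IsCompact (ImageSet F N) := isCompact_imageSet hF hFc hN
  set P₁ : Set X := (ImageSet F N ∩ N) ∪ closure U with hP₁def
  set P₂ : Set X := ImageSet F N ∩ frontier N with hP₂def
  have hfr : frontier N ⊆ N := by
    rw [frontier_eq_closure_inter_closure, hNcl.closure_eq]
    exact inter_subset_left
  have hclUN : closure U ⊆ N := hUcl.trans interior_subset
  have hP₁N : P₁ ⊆ N := union_subset inter_subset_right hclUN
  -- compactness
  have hcomp₁ : IsCompact P₁ :=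
    (hFNc.inter_right hNcl).union (hN.of_isClosed_subset isClosed_closure hclUN)
  have hcomp₂ : IsCompact P₂ := hFNc.inter_right isClosed_frontier
  -- P₂ ⊆ P₁
  have h21 : P₂ ⊆ P₁ := fun x hx => Or.inl ⟨hx.1, hfr hx.2⟩
  -- positive invariance of P₁
  have hpos₁ : ImageSet F P₁ ∩ N ⊆ P₁ := by
    rintro y ⟨hy, hyN⟩
    exact Or.inl ⟨imageSet_mono F hP₁N hy, hyN⟩
  -- positive invariance of P₂ (in fact F(P₂) ∩ N = ∅)
  have hpos₂ : ImageSet F P₂ ∩ N ⊆ P₂ := by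
    rintro y ⟨hy, hyN⟩
    exfalso
    obtain ⟨x, hxP₂, hyFx⟩ := mem_iUnion₂.1 hy
    have hxN : x ∈ N := hfr hxP₂.2
    have hxint : x ∈ interior N :=
      hblock ⟨⟨hxN, hxP₂.1⟩, ⟨y, hyFx, hyN⟩⟩
    exact hxP₂.2.2 hxint
  -- F-boundary condition
  have hbd : FBoundary F P₁ ⊆ P₂ := by
    rintro z ⟨hz1, hz2⟩
    rw [hcomp₁.isClosed.closure_eq] at hz1
    have hzN : z ∈ N := hP₁N hz1
    have hsub1 : ImageSet F P₁ \ P₁ ⊆ ImageSet F N :=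
      (diff_subset).trans (imageSet_mono F hP₁N)
    have hsub2 : ImageSet F P₁ \ P₁ ⊆ Nᶜ := by
      rintro w ⟨hw1, hw2⟩ hwN
      exact hw2 (hpos₁ ⟨hw1, hwN⟩)
    have hzFN : z ∈ ImageSet F N := by
      have := closure_mono hsub1 hz2
      rwa [hFNc.isClosed.closure_eq] at this
    have hzfr : z ∈ frontier N := by
      rw [frontier_eq_closure_inter_closure, hNcl.closure_eq]
      exact ⟨hzN, closure_mono hsub2 hz2⟩
    exact ⟨hzFN, hzfr⟩
  -- U ⊆ interior (P₁ \ P₂)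
  have hUsub : U ⊆ P₁ \ P₂ := by
    intro x hxU
    refine ⟨Or.inr (subset_closure hxU), ?_⟩
    rintro ⟨-, hxfr⟩
    exact hxfr.2 (hUcl (subset_closure hxU))
  have hinv : InvPart F N ⊆ interior (P₁ \ P₂) := by
    rintro x ⟨σ, hσ0, hσN, hσF⟩
    have hxFN : x ∈ ImageSet F N := by
      have h := hσF (-1)
      norm_num at h
      rw [hσ0] at h
      exact mem_biUnion (hσN (-1)) h
    have hxLP : x ∈ LargePre F N := by
      have h := hσF 0
      rw [hσ0] at h
      exact ⟨σ (0 + 1), h, hσN (0 + 1)⟩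
    have hxU : x ∈ U := hUnbhd ⟨⟨hxFN, hxLP⟩, hσ0 ▸ hσN 0⟩
    exact interior_maximal hUsub hU hxU
  -- P₁ \ P₂ ⊆ interior N
  have hdiff : P₁ \ P₂ ⊆ interior N := by
    rintro z ⟨hz1, hz2⟩
    rcases hz1 with hz1 | hz1
    · by_contra hzint
      exact hz2 ⟨hz1.1, by
        rw [frontier_eq_closure_inter_closure, hNcl.closure_eq]
        refine ⟨hz1.2, ?_⟩
        by_contra hcl
        rw [closure_compl, mem_compl_iff, not_not] at hcl
        exact hzint hcl⟩
    · exact hUcl hz1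
  exact ⟨hcomp₁, hcomp₂, h21, hP₁N, hpos₁, hpos₂, hbd, hinv, hdiff⟩
end

section
/- In the setting of the weak index pair construction in an isolating block, the second component P₂ := F(N) ∩ bd N is positively invariant in N: F(P₂) ∩ N ⊆ P₂. -/
open Set Topology

/-- in an isolating block `N`, the set `P₂ = F(N) ∩ bd N` is positively
invariant in `N`: `F(P₂) ∩ N ⊆ P₂`. -/
theorem P2_positively_invariant {X : Type*} [TopologicalSpace X]
    [LocallyCompactSpace X] [T2Space X] (F : X → Set X)
    (hF : UpperSemicont F) (hFc : ∀ x, IsCompact (F x))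
    (N : Set X) (hN : IsCompact N)
    (hblock : N ∩ ImageSet F N ∩ LargePre F N ⊆ interior N) :
    ImageSet F (ImageSet F N ∩ frontier N) ∩ N ⊆ ImageSet F N ∩ frontier N := by
  rintro y ⟨hyF, hyN⟩
  simp only [ImageSet, mem_iUnion] at hyF
  obtain ⟨x, ⟨hxFN, hxfr⟩, hyFx⟩ := hyF
  exfalso
  have hxN : x ∈ N := by
    have := frontier_subset_closure (s := N) hxfr
    rwa [hN.isClosed.closure_eq] at this
  have hxint : x ∈ interior N := hblock ⟨⟨hxN, hxFN⟩, ⟨y, hyFx, hyN⟩⟩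
  exact hxfr.2 hxint
end

section
/- For the pair P₁ := (F(N) ∩ N) ∪ cl U and P₂ := F(N) ∩ bd N constructed in an isolating block N (with U open, F(N) ∩ F⁻¹(N) ∩ N ⊆ U, cl U ⊆ int N), the F-boundary of P₁ is contained in P₂, i.e. cl P₁ ∩ cl(F(P₁) \ P₁) ⊆ P₂. -/
open Set Topology

/-- The image of a compact set under a usc compact-valued map is compact. -/
theorem isCompact_imageSet_aux {X Y : Type*} [TopologicalSpace X] [TopologicalSpace Y]
    (F : X → Set Y) (hF : UpperSemicont F) (hFc : ∀ x, IsCompact (F x))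
    {N : Set X} (hN : IsCompact N) : IsCompact (ImageSet F N) := by
  apply isCompact_of_finite_subcover
  intro ι U hU hcover
  classical
  have hsub : ∀ x ∈ N, F x ⊆ ⋃ i, U i := fun x hx y hy =>
    hcover (mem_biUnion hx hy)
  choose t ht using fun x (hx : x ∈ N) => (hFc x).elim_finite_subcover U hU (hsub x hx)
  obtain ⟨s, hs⟩ := hN.elim_finite_subcover
    (fun x : N => {x' | F x' ⊆ ⋃ i ∈ t x x.2, U i})
    (fun x => hF _ (isOpen_biUnion fun i _ => hU i))
    (fun x hx => mem_iUnion.2 ⟨⟨x, hx⟩, ht x hx⟩)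
  refine ⟨s.biUnion (fun x => t x x.2), ?_⟩
  intro y hy
  simp only [ImageSet, mem_iUnion] at hy
  obtain ⟨x, hx, hyx⟩ := hy
  obtain ⟨z, hz⟩ := mem_iUnion.1 (hs hx)
  simp only [mem_iUnion] at hz
  obtain ⟨hzs, hxz⟩ := hz
  have hy2 := hxz hyx
  simp only [mem_iUnion] at hy2 ⊢
  obtain ⟨i, hi, hyi⟩ := hy2
  exact ⟨i, Finset.mem_biUnion.2 ⟨z, hzs, hi⟩, hyi⟩

/-- for `P₁ = (F(N) ∩ N) ∪ cl U` and `P₂ = F(N) ∩ bd N` constructed in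
an isolating block `N`, one has `bd_F(P₁) ⊆ P₂`. -/
theorem fboundary_subset_P2 {X : Type*} [TopologicalSpace X]
    [LocallyCompactSpace X] [T2Space X] (F : X → Set X)
    (hF : UpperSemicont F) (hFc : ∀ x, IsCompact (F x))
    (N : Set X) (hN : IsCompact N)
    (hblock : N ∩ ImageSet F N ∩ LargePre F N ⊆ interior N)
    (U : Set X) (hU : IsOpen U)
    (hUnbhd : ImageSet F N ∩ LargePre F N ∩ N ⊆ U)
    (hUcl : closure U ⊆ interior N) :
    FBoundary F ((ImageSet F N ∩ N) ∪ closure U) ⊆ ImageSet F N ∩ frontier N := by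
  set P₁ := (ImageSet F N ∩ N) ∪ closure U with hP₁
  have hFNc : IsCompact (ImageSet F N) := isCompact_imageSet_aux F hF hFc hN
  have hP₁closed : IsClosed P₁ :=
    ((hFNc.isClosed.inter hN.isClosed).union isClosed_closure)
  have hP₁N : P₁ ⊆ N := by
    rintro x (⟨-, hx⟩ | hx)
    · exact hx
    · exact interior_subset (hUcl hx)
  have hkey : ImageSet F P₁ \ P₁ ⊆ ImageSet F N \ N := by
    rintro y ⟨hy1, hy2⟩
    have hyFN : y ∈ ImageSet F N := by
      simp only [ImageSet, mem_iUnion] at hy1 ⊢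
      obtain ⟨x, hx, hyx⟩ := hy1
      exact ⟨x, hP₁N hx, hyx⟩
    refine ⟨hyFN, fun hyN => hy2 (Or.inl ⟨hyFN, hyN⟩)⟩
  rintro x ⟨hx1, hx2⟩
  have hxP₁ : x ∈ P₁ := hP₁closed.closure_eq ▸ hx1
  have hx2' : x ∈ closure (ImageSet F N \ N) := closure_mono hkey hx2
  have hxFN : x ∈ ImageSet F N := by
    have : closure (ImageSet F N \ N) ⊆ ImageSet F N :=
      hFNc.isClosed.closure_subset_iff.2 diff_subset
    exact this hx2'
  have hxnotint : x ∉ interior N := by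
    have : closure (ImageSet F N \ N) ⊆ (interior N)ᶜ := by
      apply isOpen_interior.isClosed_compl.closure_subset_iff.2
      exact fun y hy hyi => hy.2 (interior_subset hyi)
    exact this hx2'
  refine ⟨hxFN, ?_, hxnotint⟩
  exact subset_closure (hP₁N hxP₁)
end

section
/- Let X = [0,6] and define F : X ⊸ X by F(x) = {0} for x ∈ [0,1), [0,1] for x = 1, {1} for x ∈ (1,3), [1,5] for x = 3, [3,5] for x ∈ (3,4), [2,5] for x = 4, {2} for x ∈ (4,6]. Then N = [2,5] is an isolating neighborhood of the invariant set S = [3,4] (i.e. Inv N = S ⊆ int N), but N is not an isolating block (N ∩ F(N) ∩ F⁻¹(N) ⊄ int N). -/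
open Set Topology

/-- The multivalued map of Example `ex:in_not_ib` on `X = [0,6]`. -/
def Fex (x : ℝ) : Set ℝ :=
  {y | (x ∈ Ico (0:ℝ) 1 ∧ y = 0) ∨
       (x = 1 ∧ y ∈ Icc (0:ℝ) 1) ∨
       (x ∈ Ioo (1:ℝ) 3 ∧ y = 1) ∨
       (x = 3 ∧ y ∈ Icc (1:ℝ) 5) ∨
       (x ∈ Ioo (3:ℝ) 4 ∧ y ∈ Icc (3:ℝ) 5) ∨
       (x = 4 ∧ y ∈ Icc (2:ℝ) 5) ∨
       (x ∈ Ioc (4:ℝ) 6 ∧ y = 2)}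

lemma mem_Fex_of_mem_Icc34 {x y : ℝ} (h3 : 3 ≤ x) (h4 : x ≤ 4) (hy3 : 3 ≤ y)
    (hy5 : y ≤ 5) : y ∈ Fex x := by
  rcases eq_or_lt_of_le h3 with h | h
  · exact Or.inr (Or.inr (Or.inr (Or.inl ⟨h.symm, by constructor <;> linarith⟩)))
  rcases eq_or_lt_of_le h4 with h' | h'
  · exact Or.inr (Or.inr (Or.inr (Or.inr (Or.inr (Or.inl ⟨h', by constructor <;> linarith⟩)))))
  · exact Or.inr (Or.inr (Or.inr (Or.inr (Or.inl ⟨⟨h, h'⟩, ⟨hy3, hy5⟩⟩))))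

/-- `N = [2,5]` is an isolating neighborhood of the invariant set
`S = [3,4]` of `Fex`, but `N` is not an isolating block.  (Since `N ⊆ (0,6)`, the
interior of `N` relative to `[0,6]` agrees with its interior in `ℝ`.) -/
theorem example_isolating_not_block :
    InvPart Fex (Icc (2:ℝ) 5) = Icc (3:ℝ) 4 ∧
    Icc (3:ℝ) 4 ⊆ interior (Icc (2:ℝ) 5) ∧
    ¬ (Icc (2:ℝ) 5 ∩ ImageSet Fex (Icc (2:ℝ) 5) ∩ LargePre Fex (Icc (2:ℝ) 5)
        ⊆ interior (Icc (2:ℝ) 5)) := by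
  refine ⟨?_, ?_, ?_⟩
  · ext x
    simp only [InvPart, mem_setOf_eq, mem_Icc]
    constructor
    · rintro ⟨σ, h0, hN, hF⟩
      have hge : ∀ n, 3 ≤ σ n := by
        intro n
        by_contra h
        push_neg at h
        have h1 := hF n
        have h2 := hN n
        have h3 := hN (n + 1)
        simp only [Fex, mem_setOf_eq, mem_Ico, mem_Ioo, mem_Icc, mem_Ioc] at h1
        rcases h1 with ⟨⟨_, hx⟩, hy⟩ | ⟨hx, _⟩ | ⟨_, hy⟩ | ⟨hx, _⟩ | ⟨⟨hx, _⟩, _⟩ |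
          ⟨hx, _⟩ | ⟨⟨hx, _⟩, _⟩ <;> linarith [h2.1, h3.1]
      have hle : ∀ n, σ n ≤ 4 := by
        intro n
        by_contra h
        push_neg at h
        have h1 := hF n
        have h2 := hN n
        have hg := hge (n + 1)
        simp only [Fex, mem_setOf_eq, mem_Ico, mem_Ioo, mem_Icc, mem_Ioc] at h1
        rcases h1 with ⟨⟨_, hx⟩, _⟩ | ⟨hx, _⟩ | ⟨⟨_, hx⟩, _⟩ | ⟨hx, _⟩ | ⟨⟨_, hx⟩, _⟩ |
          ⟨hx, _⟩ | ⟨_, hy⟩ <;> linarith [h2.2]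
      exact h0 ▸ ⟨hge 0, hle 0⟩
    · rintro ⟨h3, h4⟩
      refine ⟨fun n => if n = 0 then x else 3.5, by simp, ?_, ?_⟩
      · intro n
        by_cases h : n = 0
        · simp only [h, if_pos]
          exact ⟨by linarith, by linarith⟩
        · simp only [if_neg h, mem_Icc]
          norm_num
      · intro n
        rcases eq_or_ne n 0 with h | h
        · subst h
          simp only [if_pos rfl, if_neg (by norm_num : (0:ℤ) + 1 ≠ 0)]
          exact mem_Fex_of_mem_Icc34 h3 h4 (by norm_num) (by norm_num)
        · rcases eq_or_ne n (-1) with h' | h'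
          · subst h'
            simp only []
            rw [if_neg h, if_pos (by norm_num : (-1:ℤ) + 1 = 0)]
            exact mem_Fex_of_mem_Icc34 (by norm_num) (by norm_num) h3 (by linarith)
          · have hn1 : n + 1 ≠ 0 := fun hc => h' (by omega)
            simp only [if_neg h, if_neg hn1]
            exact mem_Fex_of_mem_Icc34 (by norm_num) (by norm_num) (by norm_num) (by norm_num)
  · rw [interior_Icc]
    intro x hx
    exact ⟨by linarith [hx.1], by linarith [hx.2]⟩
  · intro h
    have h5 : (5:ℝ) ∈ Icc (2:ℝ) 5 ∩ ImageSet Fex (Icc (2:ℝ) 5) ∩ LargePre Fex (Icc (2:ℝ) 5) := by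
      refine ⟨⟨by norm_num, ?_⟩, ?_⟩
      · refine mem_iUnion₂.mpr ⟨3, by norm_num, ?_⟩
        exact Or.inr (Or.inr (Or.inr (Or.inl ⟨rfl, by norm_num⟩)))
      · exact ⟨2, Or.inr (Or.inr (Or.inr (Or.inr (Or.inr (Or.inr ⟨⟨by norm_num, by norm_num⟩, rfl⟩))))), by norm_num⟩
    have := h h5
    rw [interior_Icc] at this
    exact absurd this.2 (by norm_num)
end

section
/- If N ⊆ X is a compact isolating neighborhood for F_{λ₀} in a parameterized family of discrete multivalued dynamical systems, then N is an isolating neighborhood for F_λ for all λ in some neighborhood of λ₀ in Λ. -/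
open Set Topology Filter

/-- Closed-graph property for usc maps with compact values into a T2 space. -/
lemma usc_mem_of_tendsto {P Y : Type*} [TopologicalSpace P] [TopologicalSpace Y] [T2Space Y]
    {G : P → Set Y} (hG : UpperSemicont G) (hGc : ∀ p, IsCompact (G p))
    {p : ℕ → P} {q : P} (hp : Filter.Tendsto p Filter.atTop (nhds q))
    {y : ℕ → Y} (hy : ∀ n, y n ∈ G (p n)) {z : Y}
    (hz : Filter.Tendsto y Filter.atTop (nhds z)) : z ∈ G q := by
  by_contra hzq
  obtain ⟨U, W, hU, hW, hGU, hzW, hdis⟩ := (hGc q).separation_of_notMem hzq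
  have hO : {r | G r ⊆ U} ∈ nhds q := (hG U hU).mem_nhds hGU
  have h1 : ∀ᶠ n in Filter.atTop, G (p n) ⊆ U := hp hO
  have h2 : ∀ᶠ n in Filter.atTop, y n ∈ W := hz (hW.mem_nhds hzW)
  obtain ⟨n, hn1, hn2⟩ := (h1.and h2).exists
  exact hdis.ne_of_mem (hn1 (hy n)) hn2 rfl

/-- if `N` is a compact isolating neighborhood for `F t₀` in a
parameterized family of dmds over a compact interval `Λ = [a,b]`, then `N` is an
isolating neighborhood for `F t` for all `t` in some neighborhood of `t₀` in `Λ`. -/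
theorem isolating_nbhd_stable {X : Type*} [TopologicalSpace X]
    [TopologicalSpace.MetrizableSpace X] [LocallyCompactSpace X]
    (a b : ℝ) (F : ℝ → X → Set X)
    (hF : UpperSemicont (fun p : ↥(Set.Icc a b) × X => F p.1.1 p.2))
    (hFc : ∀ t ∈ Set.Icc a b, ∀ x, IsCompact (F t x))
    (N : Set X) (hN : IsCompact N)
    (t₀ : ℝ) (ht₀ : t₀ ∈ Set.Icc a b)
    (hiso : InvPart (F t₀) N ⊆ interior N) :
    ∃ V ∈ nhdsWithin t₀ (Set.Icc a b),
      ∀ t ∈ V, t ∈ Set.Icc a b → InvPart (F t) N ⊆ interior N := by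
  by_contra hcon
  push_neg at hcon
  -- the set of bad parameters
  set B : Set ℝ := {t | t ∈ Set.Icc a b ∧ ¬ InvPart (F t) N ⊆ interior N} with hB
  have hclB : t₀ ∈ closure B := by
    rw [mem_closure_iff_nhds]
    intro U hU
    obtain ⟨t, htU, htI, htbad⟩ := hcon U (mem_nhdsWithin_of_mem_nhds hU)
    exact ⟨t, htU, htI, htbad⟩
  obtain ⟨t, htB, htlim⟩ := mem_closure_iff_seq_limit.mp hclB
  -- for each n, a bad full solution
  have hsol : ∀ n : ℕ, ∃ σ : ℤ → X, σ 0 ∉ interior N ∧ (∀ m, σ m ∈ N) ∧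
      ∀ m, σ (m + 1) ∈ F (t n) (σ m) := by
    intro n
    obtain ⟨x, hx, hxint⟩ := not_subset.mp (htB n).2
    obtain ⟨σ, hσ0, hσN, hσF⟩ := hx
    exact ⟨σ, hσ0 ▸ hxint, hσN, hσF⟩
  choose σ hσint hσN hσF using hsol
  -- extract a pointwise-convergent subsequence of solutions
  have hScomp : IsCompact {f : ℤ → X | ∀ m, f m ∈ N} := isCompact_pi_infinite fun _ => hN
  obtain ⟨τ, hτS, φ, hφ, hτlim⟩ := hScomp.isSeqCompact fun n => hσN n
  have hptwise : ∀ m : ℤ, Filter.Tendsto (fun k => σ (φ k) m) Filter.atTop (nhds (τ m)) := by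
    intro m
    exact (tendsto_pi_nhds.mp hτlim) m
  have htφ : Filter.Tendsto (fun k => t (φ k)) Filter.atTop (nhds t₀) :=
    htlim.comp hφ.tendsto_atTop
  -- parameters as elements of the subtype
  have htsub : Filter.Tendsto (fun k => (⟨t (φ k), (htB (φ k)).1⟩ : ↥(Set.Icc a b)))
      Filter.atTop (nhds (⟨t₀, ht₀⟩ : ↥(Set.Icc a b))) := by
    rw [IsEmbedding.subtypeVal.tendsto_nhds_iff]
    exact htφ
  -- τ is a full solution for F t₀
  have hτF : ∀ m : ℤ, τ (m + 1) ∈ F t₀ (τ m) := by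
    intro m
    have hGc : ∀ p : ↥(Set.Icc a b) × X, IsCompact ((fun p : ↥(Set.Icc a b) × X => F p.1.1 p.2) p) :=
      fun p => hFc p.1.1 p.1.2 p.2
    exact usc_mem_of_tendsto hF hGc
      (htsub.prodMk_nhds (hptwise m))
      (fun k => hσF (φ k) m) (hptwise (m + 1))
  -- τ 0 is in N but not in the interior of N
  have h0 : τ 0 ∉ interior N := by
    have hcl : IsClosed (N \ interior N) := hN.isClosed.sdiff isOpen_interior
    have : τ 0 ∈ N \ interior N :=
      hcl.mem_of_tendsto (hptwise 0)
        (Filter.Eventually.of_forall fun k => ⟨hσN (φ k) 0, hσint (φ k)⟩)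
    exact this.2
  exact h0 (hiso ⟨τ, rfl, hτS, hτF⟩)
end

section
/- For a parameterized family of discrete multivalued dynamical systems F_λ and a compact set N ⊆ X, the multivalued map λ ↦ Inv(N, λ) is upper semicontinuous on Λ: for every λ₀ and every open U ⊇ Inv(N,λ₀) there is a neighborhood of λ₀ on which Inv(N,λ) ⊆ U. -/
open Set Topology

/-- A usc multivalued map with compact values into a T2 space has closed graph. -/
lemma usc_closed_graph {P X : Type*} [TopologicalSpace P] [TopologicalSpace X] [T2Space X]
    (G : P → Set X) (hG : UpperSemicont G) (hGc : ∀ p, IsCompact (G p)) :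
    IsClosed {q : P × X | q.2 ∈ G q.1} := by
  rw [← isOpen_compl_iff, isOpen_iff_mem_nhds]
  rintro ⟨p, y⟩ hpy
  obtain ⟨V₁, V₂, hV₁, hV₂, hGV₁, hyV₂, hdisj⟩ :=
    (hGc p).separation_of_notMem (t := G p) hpy
  have : {r | G r ⊆ V₁} ×ˢ V₂ ∈ 𝓝 (p, y) :=
    ((hG V₁ hV₁).prod hV₂).mem_nhds ⟨hGV₁, hyV₂⟩
  refine Filter.mem_of_superset this ?_
  rintro ⟨r, z⟩ ⟨hr, hz⟩ hmem
  exact absurd hz (disjoint_left.mp hdisj (hr hmem))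

/-- for a parameterized family of dmds and a compact `N`, the map
`t ↦ Inv(N,t)` is upper semicontinuous on `Λ = [a,b]`: for every `t₀ ∈ Λ` and every
open `U ⊇ Inv(N,t₀)` there is a neighborhood of `t₀` in `Λ` on which
`Inv(N,t) ⊆ U`. -/
theorem inv_usc_in_parameter {X : Type*} [TopologicalSpace X]
    [TopologicalSpace.MetrizableSpace X] [LocallyCompactSpace X]
    (a b : ℝ) (F : ℝ → X → Set X)
    (hF : UpperSemicont (fun p : ↥(Set.Icc a b) × X => F p.1.1 p.2))
    (hFc : ∀ t ∈ Set.Icc a b, ∀ x, IsCompact (F t x))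
    (N : Set X) (hN : IsCompact N)
    (t₀ : ℝ) (ht₀ : t₀ ∈ Set.Icc a b)
    (U : Set X) (hU : IsOpen U) (hU₀ : InvPart (F t₀) N ⊆ U) :
    ∃ V ∈ nhdsWithin t₀ (Set.Icc a b),
      ∀ t ∈ V, t ∈ Set.Icc a b → InvPart (F t) N ⊆ U := by
  classical
  haveI : CompactSpace ↥N := isCompact_iff_compactSpace.mp hN
  set Λ' := ↥(Set.Icc a b)
  set p₀ : Λ' := ⟨t₀, ht₀⟩ with hp₀
  -- the graph of the parameterized map is closed
  have hGr : IsClosed {q : (Λ' × X) × X | q.2 ∈ F q.1.1.1 q.1.2} :=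
    usc_closed_graph _ hF (fun p => hFc p.1.1 p.1.2 p.2)
  -- partial-solution sets
  set C : ℕ → Set ((ℤ → ↥N) × Λ') := fun n =>
    {sp | ∀ k : ℤ, -(n : ℤ) ≤ k → k < n →
      ((sp.1 (k + 1) : X)) ∈ F sp.2.1 (sp.1 k)} with hC
  have hCev : ∀ k : ℤ, Continuous fun sp : (ℤ → ↥N) × Λ' => ((sp.1 k : X)) :=
    fun k => continuous_subtype_val.comp ((continuous_apply k).comp continuous_fst)
  have hCcl : ∀ n, IsClosed (C n) := by
    intro n
    have : C n = ⋂ k : ℤ, {sp : (ℤ → ↥N) × Λ' | -(n : ℤ) ≤ k → k < n →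
        ((sp.1 (k + 1) : X)) ∈ F sp.2.1 (sp.1 k)} := by
      ext sp; simp [hC, Set.mem_iInter]
    rw [this]
    refine isClosed_iInter fun k => ?_
    by_cases hk : -(n : ℤ) ≤ k ∧ k < n
    · have heq : {sp : (ℤ → ↥N) × Λ' | -(n : ℤ) ≤ k → k < n →
          ((sp.1 (k + 1) : X)) ∈ F sp.2.1 (sp.1 k)}
          = (fun sp : (ℤ → ↥N) × Λ' => ((sp.2, ((sp.1 k : X))), ((sp.1 (k + 1) : X)))) ⁻¹'
            {q : (Λ' × X) × X | q.2 ∈ F q.1.1.1 q.1.2} := by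
        ext sp; simp [hk.1, hk.2]
      rw [heq]
      exact hGr.preimage ((continuous_snd.prodMk (hCev k)).prodMk (hCev (k + 1)))
    · have heq : {sp : (ℤ → ↥N) × Λ' | -(n : ℤ) ≤ k → k < n →
          ((sp.1 (k + 1) : X)) ∈ F sp.2.1 (sp.1 k)} = univ := by
        ext sp; simp only [mem_setOf_eq, mem_univ, iff_true]
        intro h1 h2; exact absurd ⟨h1, h2⟩ hk
      rw [heq]; exact isClosed_univ
  have hCmono : ∀ n, C (n + 1) ⊆ C n := by
    intro n sp hsp k hk1 hk2
    exact hsp k (by omega) (by omega)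
  -- slices
  set K : ℕ → Λ' → Set X := fun n p =>
    (fun σ : ℤ → ↥N => (σ 0 : X)) '' {σ | (σ, p) ∈ C n} with hK
  have hKcpt : ∀ n p, IsCompact (K n p) := by
    intro n p
    have hcl : IsClosed {σ : ℤ → ↥N | (σ, p) ∈ C n} :=
      (hCcl n).preimage (continuous_id.prodMk continuous_const)
    exact (hcl.isCompact).image (continuous_subtype_val.comp (continuous_apply 0))
  have hKmono : ∀ n p, K (n + 1) p ⊆ K n p := by
    rintro n p x ⟨σ, hσ, rfl⟩
    exact ⟨σ, hCmono n hσ, rfl⟩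
  have hInv : ∀ p : Λ', ∀ n, InvPart (F p.1) N ⊆ K n p := by
    rintro p n x ⟨σ, h0, hmem, hstep⟩
    exact ⟨fun k => ⟨σ k, hmem k⟩, fun k _ _ => hstep k, h0⟩
  -- König-type argument: the intersection of the K n p₀ is inside U
  have hKU : (⋂ n, K n p₀) ⊆ U := by
    intro x hx
    simp only [Set.mem_iInter] at hx
    set B : ℕ → Set (ℤ → ↥N) := fun n => {σ | ((σ 0 : X)) = x ∧ (σ, p₀) ∈ C n} with hB
    have hBcl : ∀ n, IsClosed (B n) := by
      intro n
      exact (isClosed_eq (continuous_subtype_val.comp (continuous_apply 0)) continuous_const).inter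
        ((hCcl n).preimage (continuous_id.prodMk continuous_const))
    have hBne : ∀ n, (B n).Nonempty := by
      intro n
      obtain ⟨σ, hσ, hσ0⟩ := hx n
      exact ⟨σ, hσ0, hσ⟩
    have hBdec : ∀ n, B (n + 1) ⊆ B n := fun n σ hσ => ⟨hσ.1, hCmono n hσ.2⟩
    obtain ⟨σ, hσ⟩ := IsCompact.nonempty_iInter_of_sequence_nonempty_isCompact_isClosed B hBdec
      hBne ((hBcl 0).isCompact) hBcl
    simp only [Set.mem_iInter] at hσ
    refine hU₀ ⟨fun k => (σ k : X), (hσ 0).1, fun k => (σ k).2, fun k => ?_⟩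
    exact (hσ (k.natAbs + 1)).2 k (by omega) (by omega)
  -- pick n with K n p₀ ⊆ U
  obtain ⟨n, hnU⟩ : ∃ n, K n p₀ ⊆ U := by
    refine exists_subset_nhds_of_isCompact' (V := fun n => K n p₀)
      ((antitone_nat_of_succ_le (fun n => hKmono n p₀)).directed_ge)
      (fun n => hKcpt n p₀) (fun n => (hKcpt n p₀).isClosed)
      (fun x hx => hU.mem_nhds (hKU hx))
  -- the bad set of parameters is closed
  set D : Set ((ℤ → ↥N) × Λ') := C n ∩ {sp | (sp.1 0 : X) ∈ Uᶜ} with hD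
  have hDcl : IsClosed D :=
    (hCcl n).inter ((hU.isClosed_compl).preimage (hCev 0))
  set O : Set Λ' := (Prod.snd '' D)ᶜ with hO
  have hOopen : IsOpen O := (isClosedMap_snd_of_compactSpace D hDcl).isOpen_compl
  have hp₀O : p₀ ∈ O := by
    rintro ⟨⟨σ, p⟩, ⟨hσC, hσU⟩, rfl⟩
    exact hσU (hnU ⟨σ, hσC, rfl⟩)
  have hOprop : ∀ p ∈ O, K n p ⊆ U := by
    rintro p hp x ⟨σ, hσ, rfl⟩
    by_contra hxU
    exact hp ⟨(σ, p), ⟨hσ, hxU⟩, rfl⟩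
  obtain ⟨W, hWopen, hWeq⟩ := isOpen_induced_iff.mp hOopen
  refine ⟨W, mem_nhdsWithin_of_mem_nhds (hWopen.mem_nhds ?_), fun t htW htab => ?_⟩
  · rw [← hWeq] at hp₀O; exact hp₀O
  · intro x hx
    have hmem : (⟨t, htab⟩ : Λ') ∈ O := by rw [← hWeq]; exact htW
    exact hOprop ⟨t, htab⟩ hmem (hInv ⟨t, htab⟩ n hx)
end

section
/- Commutativity setup, invariance of the image: let F = Ψ∘φ on X and G = φ∘Ψ on Y, with φ : X → Y continuous and injective on a compact domain containing a neighborhood of S, and Ψ : Y ⊸ X upper semicontinuous with dom Ψ containing a neighborhood of φ(S). If S is invariant with respect to F (S = Inv_F S), then φ(S) is invariant with respect to G: φ(S) = Inv_G(φ(S)). -/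
open Set Topology

/-- Upper semicontinuity of a partial multivalued map on its domain `A`. -/
def UpperSemicontOn {X Y : Type*} [TopologicalSpace X] [TopologicalSpace Y]
    (F : X → Set Y) (A : Set X) : Prop :=
  ∀ U : Set Y, IsOpen U → ∃ V : Set X, IsOpen V ∧ {x ∈ A | F x ⊆ U} = V ∩ A

/-- commutativity setup, invariance of the image: with `F = Ψ∘φ` and
`G = φ∘Ψ`, `φ` continuous and injective on its compact domain which contains a
neighborhood of `S`, `Ψ` usc on its domain which contains a neighborhood of
`φ(S)`, if `S` is invariant for `F` then `φ(S)` is invariant for `G`. -/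
theorem image_invariant {X Y : Type*} [TopologicalSpace X]
    [TopologicalSpace.MetrizableSpace X] [LocallyCompactSpace X] [TopologicalSpace Y]
    [TopologicalSpace.MetrizableSpace Y] [LocallyCompactSpace Y]
    (F : X → Set X) (G : Y → Set Y)
    (hF : UpperSemicont F) (hFc : ∀ x, IsCompact (F x))
    (hG : UpperSemicont G) (hGc : ∀ y, IsCompact (G y))
    (φ : X → Y) (Dφ : Set X) (hDφ : IsCompact Dφ)
    (hφc : ContinuousOn φ Dφ) (hφinj : InjOn φ Dφ)
    (Ψ : Y → Set X) (DΨ : Set Y) (hΨ : UpperSemicontOn Ψ DΨ)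
    (hFΨφ : ∀ x ∈ Dφ, F x = Ψ (φ x))
    (hGφΨ : ∀ y ∈ DΨ, G y = φ '' Ψ y)
    (S : Set X) (hSdom : S ⊆ interior Dφ) (hSim : φ '' S ⊆ interior DΨ)
    (hSinv : InvPart F S = S) :
    InvPart G (φ '' S) = φ '' S := by
  apply Subset.antisymm
  · rintro y ⟨τ, h0, hτ, -⟩
    exact h0 ▸ hτ 0
  · rintro _ ⟨x, hxS, rfl⟩
    have hx : x ∈ InvPart F S := hSinv.symm ▸ hxS
    obtain ⟨σ, h0, hσS, hσF⟩ := hx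
    refine ⟨fun n => φ (σ n), by simp [h0], fun n => ⟨σ n, hσS n, rfl⟩, fun n => ?_⟩
    have hd : σ n ∈ Dφ := interior_subset (hSdom (hσS n))
    have hΨmem : φ (σ n) ∈ DΨ := interior_subset (hSim ⟨σ n, hσS n, rfl⟩)
    rw [hGφΨ _ hΨmem]
    exact ⟨σ (n + 1), by rw [← hFΨφ _ hd]; exact hσF n, rfl⟩
end

section
/- In the strongly isolated commutativity setting, if N is a compact neighborhood of φ(S) with Ψ(N) ⊆ int M (M a strongly isolating neighborhood of S), then φ⁻¹(N) is an isolating neighborhood of S with respect to F: Inv_F(φ⁻¹(N)) = S ⊆ int φ⁻¹(N). -/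
open Set Topology

/-- `N` is an isolating neighborhood of the invariant set `S`. -/
def IsIsolatingNbhdOf {X : Type*} [TopologicalSpace X] (F : X → Set X)
    (N S : Set X) : Prop :=
  IsCompact N ∧ InvPart F N = S ∧ S ⊆ interior N

/-- in the strongly isolated commutativity setting, if `N` is a compact
neighborhood of `φ(S)` with `Ψ(N) ⊆ int M` for a strongly isolating neighborhood
`M` of `S`, then `φ⁻¹(N)` is an isolating neighborhood of `S` for `F`. -/
theorem preimage_isolating_nbhd {X Y : Type*} [TopologicalSpace X]
    [TopologicalSpace.MetrizableSpace X] [LocallyCompactSpace X] [TopologicalSpace Y]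
    [TopologicalSpace.MetrizableSpace Y] [LocallyCompactSpace Y]
    (F : X → Set X) (G : Y → Set Y)
    (hF : UpperSemicont F) (hFc : ∀ x, IsCompact (F x))
    (hG : UpperSemicont G) (hGc : ∀ y, IsCompact (G y))
    (φ : X → Y) (Dφ : Set X) (hDφ : IsCompact Dφ) (hφc : ContinuousOn φ Dφ)
    (Ψ : Y → Set X) (DΨ : Set Y) (hΨ : UpperSemicontOn Ψ DΨ)
    (hFΨφ : ∀ x ∈ Dφ, F x = Ψ (φ x))
    (hGφΨ : ∀ y ∈ DΨ, G y = φ '' Ψ y)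
    (S : Set X) (M : Set X) (hM : IsCompact M) (hMdom : M ⊆ Dφ)
    (hSM : InvPart F M = S)
    (hstrong : S ∪ ImageSet F S ⊆ interior M)
    (N : Set Y) (hN : IsCompact N) (hNnbhd : φ '' S ⊆ interior N) (hNdom : N ⊆ DΨ)
    (hΨN : ImageSet Ψ N ⊆ interior M) :
    InvPart F {x ∈ Dφ | φ x ∈ N} = S ∧ S ⊆ interior {x ∈ Dφ | φ x ∈ N} := by
  have hSsub : S ⊆ M := by
    intro x hx; rw [← hSM] at hx; obtain ⟨σ, h0, hmem, _⟩ := hx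
    rw [← h0]; exact hmem 0
  constructor
  · apply Set.Subset.antisymm
    · intro x hx
      obtain ⟨σ, h0, hmem, hsol⟩ := hx
      rw [← hSM]
      refine ⟨σ, h0, fun n => ?_, hsol⟩
      have heq : σ n = σ ((n - 1) + 1) := by norm_num
      rw [heq]
      have hn1 := hmem (n - 1)
      have hs := hsol (n - 1)
      rw [hFΨφ _ hn1.1] at hs
      have : σ ((n - 1) + 1) ∈ ImageSet Ψ N := by
        simp only [ImageSet, Set.mem_iUnion]
        exact ⟨φ (σ (n - 1)), hn1.2, hs⟩
      exact interior_subset (hΨN this)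
    · intro x hx
      rw [← hSM] at hx
      obtain ⟨σ, h0, hmem, hsol⟩ := hx
      have hshift : ∀ k : ℤ, σ k ∈ S := by
        intro k
        rw [← hSM]
        refine ⟨fun n => σ (n + k), by simp, fun n => hmem _, fun n => ?_⟩
        show σ (n + 1 + k) ∈ F (σ (n + k))
        rw [add_right_comm]
        exact hsol (n + k)
      refine ⟨σ, h0, fun n => ⟨hMdom (hmem n), ?_⟩, hsol⟩
      exact interior_subset (hNnbhd ⟨σ n, hshift n, rfl⟩)
  · intro x hx
    have hxM : x ∈ interior M := hstrong (Or.inl hx)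
    have hxN : φ x ∈ interior N := hNnbhd ⟨x, hx, rfl⟩
    obtain ⟨V, hVopen, hVeq⟩ := (continuousOn_iff'.1 hφc) (interior N) isOpen_interior
    have hxV : x ∈ V := by
      have : x ∈ φ ⁻¹' interior N ∩ Dφ := ⟨hxN, hMdom (hSsub hx)⟩
      rw [hVeq] at this; exact this.1
    refine interior_maximal ?_ (hVopen.inter isOpen_interior) ⟨hxV, hxM⟩
    intro z hz
    have hzD : z ∈ Dφ := hMdom (interior_subset hz.2)
    have : z ∈ φ ⁻¹' interior N ∩ Dφ := by rw [hVeq]; exact ⟨hz.1, hzD⟩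
    exact ⟨hzD, interior_subset this.1⟩
end
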